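/- arXiv:1904.13190 — 3 statements merged into one kernel-verified Lean document; each statement's English description precedes it below -/
import Mathlib

section
/- Let π_i : H → A_i (i ∈ I) be a jointly inner faithful family of Hopf algebra morphisms, i.e. the intersection over all words i ∈ L_I of the kernels of the maps π_i = (π_{i_1} ⊗ ⋯ ⊗ π_{i_k}) ∘ Δ^{(k)} (with antipode twists on starred letters) is zero. Then for every finite linearly independent subset F ⊂ H there exists a single word i ∈ L_I such that π_i(F) ⊂ A_i is linearly independent. -/
open TensorProduct

section Word

variable {k : Type} [Field k] {I : Type} {H : Type} [Ring H] [HopfAlgebra k H]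
variable (k) (A : I → Type) [∀ i, Ring (A i)] [∀ i, HopfAlgebra k (A i)]

/-- Underlying letter of a letter or its formal adjoint. -/
def letterIndex : I ⊕ I → I := Sum.elim id id

/-- The codomain `A_{i_1} ⊗ ⋯ ⊗ A_{i_k}` (right-nested, terminated by `k`; as a vector
space, so that `A_{i*} = A_i^{op}` has the same underlying space as `A_i`)
attached to a word in letters from `I` and their formal adjoints. -/
noncomputable def wordSpace : List (I ⊕ I) → ModuleCat k
  | [] => ModuleCat.of k k
  | a :: w => ModuleCat.of k (TensorProduct k (A (letterIndex a)) (wordSpace w))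

variable {A} {k}

/-- The map attached to a single letter: `π_i` for a plain letter `i`, and
`π_i ∘ S` (valued in `A_i^{op}`, which has the same underlying vector space) for
the formal adjoint `i*`. -/
noncomputable def letterMap (π : ∀ i, H →ₐc[k] A i) (a : I ⊕ I) : H →ₗ[k] A (letterIndex a) :=
  match a with
  | Sum.inl i => (π i).toLinearMap
  | Sum.inr i => (π i).toLinearMap ∘ₗ HopfAlgebra.antipode (R := k)

/-- The word map `π_𝐢 = (π_{i_1} ⊗ ⋯ ⊗ π_{i_k}) ∘ Δ^{(k)}` (with antipode twists on
starred letters), built by iterated comultiplication. -/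
noncomputable def wordMap (π : ∀ i, H →ₐc[k] A i) :
    ∀ w : List (I ⊕ I), H →ₗ[k] wordSpace k A w
  | [] => Coalgebra.counit
  | a :: w => TensorProduct.map (letterMap π a) (wordMap π w) ∘ₗ Coalgebra.comul

end Word

/-! The subspaces `span F ⊓ ker π_w` of the finite-dimensional space `span F` are downward
directed: `ker π_{u ++ v}` lies in `ker π_v` (apply the counit to the first `|u|` tensor factors)
and in `ker π_u` (tensoring over a field preserves inclusions of kernels). Hence one of them,
for some word `w`, is the least; by joint inner faithfulness it is zero, i.e. `π_w` is injective
on `span F`. -/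

theorem Directed.exists_forall_le {α ι : Type*} [Preorder α] [WellFoundedLT α] [Nonempty ι]
    {f : ι → α} (hf : Directed (· ≥ ·) f) : ∃ i, ∀ j, f i ≤ f j := by
  obtain ⟨i, -, hmin⟩ :=
    exists_minimalFor_of_wellFoundedLT (fun _ => True) f ⟨Classical.arbitrary ι, trivial⟩
  refine ⟨i, fun j => ?_⟩
  obtain ⟨l, hli, hlj⟩ := hf i j
  exact (hmin trivial hli).trans hlj

theorem LinearMap.ker_lTensor_mono {R M N P Q : Type*} [CommRing R] [AddCommGroup M] [Module R M]
    [Module.Flat R M] [AddCommGroup N] [Module R N] [AddCommGroup P] [Module R P]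
    [AddCommGroup Q] [Module R Q] {f : N →ₗ[R] P} {g : N →ₗ[R] Q} (h : ker f ≤ ker g) :
    ker (lTensor M f) ≤ ker (lTensor M g) := by
  rw [(Module.Flat.lTensor_exact M (exact_subtype_ker_map f)).linearMap_ker_eq]
  rintro _ ⟨y, rfl⟩
  have hg : g ∘ₗ (ker f).subtype = 0 := by ext x; exact h x.2
  rw [mem_ker, ← comp_apply, ← lTensor_comp, hg, lTensor_zero, zero_apply]

section WordMap

variable {k : Type} [Field k] {I : Type} {H : Type} [Ring H] [HopfAlgebra k H]
  {A : I → Type} [∀ i, Ring (A i)] [∀ i, HopfAlgebra k (A i)] (π : ∀ i, H →ₐc[k] A i)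

theorem counit_comp_letterMap (a : I ⊕ I) :
    Coalgebra.counit ∘ₗ letterMap π a = Coalgebra.counit := by
  cases a with
  | inl i => exact (π i).counit_comp
  | inr i =>
    ext x
    exact (CoalgHomClass.counit_comp_apply (π i) _).trans (HopfAlgebra.counit_antipode _)

theorem wordMap_cons (a : I ⊕ I) (w : List (I ⊕ I)) :
    wordMap π (a :: w) =
      (wordMap π w).lTensor _ ∘ₗ (letterMap π a).rTensor _ ∘ₗ Coalgebra.comul := by
  rw [wordMap, ← LinearMap.lTensor_comp_rTensor]; rfl

theorem ker_wordMap_cons_le (a : I ⊕ I) (w : List (I ⊕ I)) :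
    LinearMap.ker (wordMap π (a :: w)) ≤ LinearMap.ker (wordMap π w) := by
  have hlid : (TensorProduct.lid k _).toLinearMap ∘ₗ (wordMap π w).lTensor k =
      wordMap π w ∘ₗ (TensorProduct.lid k H).toLinearMap := by
    ext; simp
  have hdrop : ((TensorProduct.lid k _).toLinearMap ∘ₗ Coalgebra.counit.rTensor _) ∘ₗ
      wordMap π (a :: w) = wordMap π w := by
    change (TensorProduct.lid k _).toLinearMap ∘ₗ (Coalgebra.counit.rTensor _ ∘ₗ
      TensorProduct.map (letterMap π a) (wordMap π w)) ∘ₗ Coalgebra.comul = _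
    rw [LinearMap.rTensor_comp_map, counit_comp_letterMap, ← LinearMap.lTensor_comp_rTensor,
      ← LinearMap.comp_assoc, ← LinearMap.comp_assoc, hlid, LinearMap.comp_assoc,
      LinearMap.comp_assoc, Coalgebra.rTensor_counit_comp_comul]
    ext; simp
  rw [← hdrop]
  exact LinearMap.ker_le_ker_comp (wordMap π (a :: w)) _

theorem ker_wordMap_append_le_right (u v : List (I ⊕ I)) :
    LinearMap.ker (wordMap π (u ++ v)) ≤ LinearMap.ker (wordMap π v) := by
  induction u with
  | nil => exact le_rfl
  | cons a u ih => exact (ker_wordMap_cons_le π a _).trans ih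

theorem ker_wordMap_append_le_left (u v : List (I ⊕ I)) :
    LinearMap.ker (wordMap π (u ++ v)) ≤ LinearMap.ker (wordMap π u) := by
  induction u with
  | nil =>
    have h := ker_wordMap_append_le_right π v []
    rwa [List.append_nil] at h
  | cons a u ih =>
    rw [List.cons_append, wordMap_cons, wordMap_cons]
    exact fun _ hx => LinearMap.ker_lTensor_mono ih hx

end WordMap

/-- filter lemma. If the family `π_i : H → A_i` of Hopf algebra maps is
jointly inner faithful, i.e. the kernels of all the word maps `π_𝐢` intersect to zero, then
every finite linearly independent subset `F ⊂ H` stays linearly independent under `π_𝐢` for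
a single suitable word `𝐢`. -/
theorem exists_word_linearIndependent
    {k : Type} [Field k] {I : Type} {H : Type} [Ring H] [HopfAlgebra k H]
    {A : I → Type} [∀ i, Ring (A i)] [∀ i, HopfAlgebra k (A i)]
    (π : ∀ i, H →ₐc[k] A i)
    (hIF : ∀ x : H, (∀ w : List (I ⊕ I), wordMap π w x = 0) → x = 0)
    (F : Finset H) (hF : LinearIndependent k ((↑) : F → H)) :
    ∃ w : List (I ⊕ I), LinearIndependent k (fun f : F => wordMap π w f) := by
  set V := Submodule.span k (F : Set H)
  let K : List (I ⊕ I) → Submodule k V := fun w => (LinearMap.ker (wordMap π w)).comap V.subtype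
  have hK : Directed (· ≥ ·) K := fun u v =>
    ⟨u ++ v, Submodule.comap_mono (ker_wordMap_append_le_left π u v),
      Submodule.comap_mono (ker_wordMap_append_le_right π u v)⟩
  obtain ⟨w, hw⟩ := hK.exists_forall_le
  have hbot : K w = ⊥ :=
    eq_bot_iff.2 fun x hx => (Submodule.mem_bot k).2 (Subtype.ext (hIF x fun u => hw u hx))
  refine ⟨w, hF.map ?_⟩
  rwa [Subtype.range_coe, Submodule.disjoint_iff_comap_eq_bot]
end

section
/- Let π : H → A and π' : K → B be families reduced to the diagonal setup: embed H and K into H ⊗ K via x ↦ x ⊗ 1 and y ↦ 1 ⊗ y. Then the induced Hopf algebra map H * K → (H ⊗ K) * (H ⊗ K) (sending the first free factor via the first embedding into the first copy and the second free factor via the second embedding into the second copy) is an injective Hopf algebra morphism. -/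
open TensorProduct

/-- `(P, ι₁, ι₂)` is a free product (i.e. coproduct) of the `k`-algebras `A` and `B`:
every pair of algebra maps `A → C`, `B → C` factors uniquely through `P`. -/
structure IsAlgebraCoprod (k : Type) [Field k] {A B P : Type}
    [Ring A] [Algebra k A] [Ring B] [Algebra k B] [Ring P] [Algebra k P]
    (ι₁ : A →ₐ[k] P) (ι₂ : B →ₐ[k] P) : Prop where
  existsUnique : ∀ (C : Type) [Ring C] [Algebra k C] (f : A →ₐ[k] C) (g : B →ₐ[k] C),
    ∃! h : P →ₐ[k] C, h.comp ι₁ = f ∧ h.comp ι₂ = g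

/-!
The embeddings `x ↦ x ⊗ 1` and `y ↦ 1 ⊗ y` are bialgebra maps, split by `id ⊗ ε` and `ε ⊗ id`.
Hence the map `Q → P` induced on the free product by these retractions is a left inverse of `θ`.
Moreover `θ` agrees with bialgebra maps on both free factors, so by the uniqueness in the universal
property of `P` it intertwines counits and comultiplications, which are algebra maps.
-/

namespace Bialgebra.TensorProduct

section Include

variable (R A B : Type) [CommSemiring R] [Semiring A] [Bialgebra R A] [Semiring B] [Bialgebra R B]

noncomputable def includeLeft : A →ₐc[R] A ⊗[R] B :=
  (map (BialgHom.id R A) (unitBialgHom R B)).comp (Bialgebra.TensorProduct.rid R R A).symm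

noncomputable def includeRight : B →ₐc[R] A ⊗[R] B :=
  (map (unitBialgHom R A) (BialgHom.id R B)).comp (Bialgebra.TensorProduct.lid R B).symm

@[simp]
theorem includeLeft_toAlgHom :
    (includeLeft R A B : A →ₐ[R] A ⊗[R] B) = Algebra.TensorProduct.includeLeft := by
  ext; simp [includeLeft]

@[simp]
theorem includeRight_toAlgHom :
    (includeRight R A B : B →ₐ[R] A ⊗[R] B) = Algebra.TensorProduct.includeRight := by
  ext; simp [includeRight]

end Include

section ProjLeft

variable (R A B : Type) [CommSemiring R] [Semiring A] [Algebra R A] [Semiring B] [Bialgebra R B]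

noncomputable def projLeft : A ⊗[R] B →ₐ[R] A :=
  (Algebra.TensorProduct.rid R R A).toAlgHom.comp
    (Algebra.TensorProduct.map (AlgHom.id R A) (counitAlgHom R B))

theorem projLeft_comp_includeLeft :
    (projLeft R A B).comp Algebra.TensorProduct.includeLeft = AlgHom.id R A := by
  ext; simp [projLeft]

end ProjLeft

section ProjRight

variable (R A B : Type) [CommSemiring R] [Semiring A] [Bialgebra R A] [Semiring B] [Algebra R B]

noncomputable def projRight : A ⊗[R] B →ₐ[R] B :=
  (Algebra.TensorProduct.lid R B).toAlgHom.comp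
    (Algebra.TensorProduct.map (counitAlgHom R A) (AlgHom.id R B))

theorem projRight_comp_includeRight :
    (projRight R A B).comp Algebra.TensorProduct.includeRight = AlgHom.id R B := by
  ext; simp [projRight]

end ProjRight

end Bialgebra.TensorProduct

namespace IsAlgebraCoprod

section Algebra

variable {k : Type} [Field k] {A B P : Type} [Ring A] [Algebra k A] [Ring B] [Algebra k B]
  [Ring P] [Algebra k P] {ι₁ : A →ₐ[k] P} {ι₂ : B →ₐ[k] P}

theorem hom_ext (hP : IsAlgebraCoprod k ι₁ ι₂) {C : Type} [Ring C] [Algebra k C]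
    {f g : P →ₐ[k] C} (h₁ : f.comp ι₁ = g.comp ι₁) (h₂ : f.comp ι₂ = g.comp ι₂) : f = g :=
  (hP.existsUnique C _ _).unique ⟨h₁, h₂⟩ ⟨rfl, rfl⟩

/-- A coproduct of split monomorphisms is a split monomorphism. -/
theorem injective_of_leftInverse (hP : IsAlgebraCoprod k ι₁ ι₂)
    {A' B' Q : Type} [Ring A'] [Algebra k A'] [Ring B'] [Algebra k B'] [Ring Q] [Algebra k Q]
    {κ₁ : A' →ₐ[k] Q} {κ₂ : B' →ₐ[k] Q} (hQ : IsAlgebraCoprod k κ₁ κ₂)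
    {i : A →ₐ[k] A'} {j : B →ₐ[k] B'} {r : A' →ₐ[k] A} {s : B' →ₐ[k] B}
    (hr : r.comp i = AlgHom.id k A) (hs : s.comp j = AlgHom.id k B)
    {θ : P →ₐ[k] Q} (h₁ : θ.comp ι₁ = κ₁.comp i) (h₂ : θ.comp ι₂ = κ₂.comp j) :
    Function.Injective θ := by
  obtain ⟨ρ, ⟨hρ₁, hρ₂⟩, -⟩ := hQ.existsUnique P (ι₁.comp r) (ι₂.comp s)
  have hρθ : ρ.comp θ = AlgHom.id k P := hP.hom_ext
    (by rw [AlgHom.comp_assoc, h₁, ← AlgHom.comp_assoc, hρ₁, AlgHom.comp_assoc, hr,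
      AlgHom.comp_id, AlgHom.id_comp])
    (by rw [AlgHom.comp_assoc, h₂, ← AlgHom.comp_assoc, hρ₂, AlgHom.comp_assoc, hs,
      AlgHom.comp_id, AlgHom.id_comp])
  exact Function.LeftInverse.injective (g := ρ) (AlgHom.congr_fun hρθ)

end Algebra

section Bialgebra

open Bialgebra

variable {k : Type} [Field k] {A B P Q : Type} [Ring A] [Bialgebra k A] [Ring B] [Bialgebra k B]
  [Ring P] [Bialgebra k P] [Ring Q] [Bialgebra k Q] {ι₁ : A →ₐc[k] P} {ι₂ : B →ₐc[k] P}
  (hP : IsAlgebraCoprod k (ι₁ : A →ₐ[k] P) (ι₂ : B →ₐ[k] P))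
  {θ : P →ₐ[k] Q} {g₁ : A →ₐc[k] Q} {g₂ : B →ₐc[k] Q}
  (h₁ : θ.comp (ι₁ : A →ₐ[k] P) = g₁) (h₂ : θ.comp (ι₂ : B →ₐ[k] P) = g₂)
include hP h₁ h₂

theorem counitAlgHom_comp_of_comp_eq_bialgHom : (counitAlgHom k Q).comp θ = counitAlgHom k P :=
  hP.hom_ext
    (by rw [AlgHom.comp_assoc, h₁, BialgHom.counitAlgHom_comp, BialgHom.counitAlgHom_comp])
    (by rw [AlgHom.comp_assoc, h₂, BialgHom.counitAlgHom_comp, BialgHom.counitAlgHom_comp])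

theorem comulAlgHom_comp_of_comp_eq_bialgHom :
    (comulAlgHom k Q).comp θ = (Algebra.TensorProduct.map θ θ).comp (comulAlgHom k P) :=
  hP.hom_ext
    (by rw [AlgHom.comp_assoc, h₁, AlgHom.comp_assoc, ← BialgHom.map_comp_comulAlgHom,
      ← BialgHom.map_comp_comulAlgHom, ← AlgHom.comp_assoc, ← Algebra.TensorProduct.map_comp, h₁])
    (by rw [AlgHom.comp_assoc, h₂, AlgHom.comp_assoc, ← BialgHom.map_comp_comulAlgHom,
      ← BialgHom.map_comp_comulAlgHom, ← AlgHom.comp_assoc, ← Algebra.TensorProduct.map_comp, h₂])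

end Bialgebra

end IsAlgebraCoprod

/-- Embed `H` and `K` into the tensor product Hopf algebra `H ⊗ K` via
`x ↦ x ⊗ 1` and `y ↦ 1 ⊗ y`. Then the induced map from the free product `P = H * K`
(coproduct with inclusions `ι₁, ι₂`) to `Q = (H ⊗ K) * (H ⊗ K)` (coproduct with
inclusions `κ₁, κ₂`), sending the first free factor into the first copy and the second
free factor into the second copy, is an injective Hopf algebra morphism (injective, and
compatible with the counits and comultiplications). -/
theorem freeProduct_embeds_freeProduct_of_tensor
    {k : Type} [Field k]
    {H K P Q : Type} [Ring H] [Ring K] [Ring P] [Ring Q]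
    [HopfAlgebra k H] [HopfAlgebra k K] [HopfAlgebra k P] [HopfAlgebra k Q]
    (ι₁ : H →ₐc[k] P) (ι₂ : K →ₐc[k] P)
    (hP : IsAlgebraCoprod k (ι₁ : H →ₐ[k] P) (ι₂ : K →ₐ[k] P))
    (κ₁ κ₂ : (H ⊗[k] K) →ₐc[k] Q)
    (hQ : IsAlgebraCoprod k (κ₁ : (H ⊗[k] K) →ₐ[k] Q) (κ₂ : (H ⊗[k] K) →ₐ[k] Q))
    (θ : P →ₐ[k] Q)
    (hθ₁ : θ.comp (ι₁ : H →ₐ[k] P) =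
      (κ₁ : (H ⊗[k] K) →ₐ[k] Q).comp Algebra.TensorProduct.includeLeft)
    (hθ₂ : θ.comp (ι₂ : K →ₐ[k] P) =
      (κ₂ : (H ⊗[k] K) →ₐ[k] Q).comp Algebra.TensorProduct.includeRight) :
    Function.Injective θ ∧
      Coalgebra.counit (R := k) (A := Q) ∘ₗ θ.toLinearMap = Coalgebra.counit (R := k) (A := P) ∧
      Coalgebra.comul (R := k) (A := Q) ∘ₗ θ.toLinearMap =
        TensorProduct.map θ.toLinearMap θ.toLinearMap ∘ₗ Coalgebra.comul (R := k) (A := P) := by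
  have hg₁ : θ.comp (ι₁ : H →ₐ[k] P) =
      (κ₁.comp (Bialgebra.TensorProduct.includeLeft k H K) : H →ₐ[k] Q) := by
    rw [hθ₁, BialgHom.comp_toAlgHom, Bialgebra.TensorProduct.includeLeft_toAlgHom]
  have hg₂ : θ.comp (ι₂ : K →ₐ[k] P) =
      (κ₂.comp (Bialgebra.TensorProduct.includeRight k H K) : K →ₐ[k] Q) := by
    rw [hθ₂, BialgHom.comp_toAlgHom, Bialgebra.TensorProduct.includeRight_toAlgHom]
  exact ⟨hP.injective_of_leftInverse hQ (Bialgebra.TensorProduct.projLeft_comp_includeLeft k H K)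
      (Bialgebra.TensorProduct.projRight_comp_includeRight k H K) hθ₁ hθ₂,
    congr(($(hP.counitAlgHom_comp_of_comp_eq_bialgHom hg₁ hg₂)).toLinearMap),
    congr(($(hP.comulAlgHom_comp_of_comp_eq_bialgHom hg₁ hg₂)).toLinearMap)⟩
end

section
/- Let H be a Hopf algebra over a field k and π : H → A an algebra morphism. There exists a largest Hopf ideal I of H contained in ker π; equivalently, there is a Hopf algebra quotient H → H/I (the Hopf image of π) through which π factors and which is universal among Hopf quotients of H factoring π. -/
open TensorProduct

/-- A Hopf ideal of a Hopf algebra `L` over `k`: a two-sided ideal `I` with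
`ε(I) = 0`, `Δ(I) ⊆ I ⊗ L + L ⊗ I` and `S(I) ⊆ I`. -/
def IsHopfIdeal {k L : Type} [Field k] [Ring L] [HopfAlgebra k L] (I : Ideal L) : Prop :=
  (∀ x ∈ I, Coalgebra.counit (R := k) x = 0) ∧
  (∀ x ∈ I, Coalgebra.comul (R := k) x ∈
      LinearMap.range ((Submodule.restrictScalars k I).subtype.rTensor L) ⊔
        LinearMap.range ((Submodule.restrictScalars k I).subtype.lTensor L)) ∧
  (∀ x ∈ I, HopfAlgebra.antipode (R := k) x ∈ I)

/-- A family of algebra maps `π_i : L → A_i` out of a Hopf algebra is jointly inner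
faithful if the maps do not simultaneously factor through a proper Hopf quotient of `L`;
equivalently, the only Hopf ideal of `L` contained in all the kernels is zero. -/
def JointlyInnerFaithful (k : Type) [Field k] {L : Type} [Ring L] [HopfAlgebra k L]
    {ι : Type} {A : ι → Type} [∀ i, Ring (A i)] [∀ i, Algebra k (A i)]
    (π : ∀ i, L →ₐ[k] A i) : Prop :=
  ∀ J : Ideal L, IsHopfIdeal (k := k) J → (∀ i, ∀ x ∈ J, π i x = 0) → J = ⊥

/-!
Being a Hopf ideal is preserved by arbitrary suprema: each of the three conditions is
additive in `x`, and `I ↦ I ⊗ H + H ⊗ I` is monotone, so it suffices to check them on the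
members of the family. The largest Hopf ideal inside `ker π` is then the supremum of all
Hopf ideals inside `ker π`.
-/

section TensorSum

variable (k : Type) {L : Type} [CommSemiring k] [Semiring L] [Algebra k L]

def Ideal.tensorSum (I : Ideal L) : Submodule k (L ⊗[k] L) :=
  LinearMap.range ((Submodule.restrictScalars k I).subtype.rTensor L) ⊔
    LinearMap.range ((Submodule.restrictScalars k I).subtype.lTensor L)

theorem Ideal.tensorSum_mono : Monotone (Ideal.tensorSum k (L := L)) := by
  intro J I h
  have hJI : (Submodule.restrictScalars k J).subtype =
      (Submodule.restrictScalars k I).subtype.comp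
        (Submodule.inclusion (Submodule.restrictScalars_mono k h)) := rfl
  apply sup_le_sup
  · rw [hJI, LinearMap.rTensor_comp]
    exact LinearMap.range_comp_le_range _ _
  · rw [hJI, LinearMap.lTensor_comp]
    exact LinearMap.range_comp_le_range _ _

end TensorSum

theorem isHopfIdeal_sSup {k L : Type} [Field k] [Ring L] [HopfAlgebra k L] {S : Set (Ideal L)} (hS : ∀ J ∈ S, IsHopfIdeal (k := k) J) :
    IsHopfIdeal (k := k) (sSup S) := by
  suffices h : ∀ x ∈ sSup S, Coalgebra.counit (R := k) x = 0 ∧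
      Coalgebra.comul (R := k) x ∈ Ideal.tensorSum k (sSup S) ∧
      HopfAlgebra.antipode (R := k) x ∈ sSup S from
    ⟨fun x hx => (h x hx).1, fun x hx => (h x hx).2.1, fun x hx => (h x hx).2.2⟩
  intro x hx
  rw [sSup_eq_iSup'] at hx
  refine Submodule.iSup_induction (x := x) _ hx ?_ ?_ ?_
  · intro J x hx
    obtain ⟨hε, hΔ, hS⟩ := hS J J.2
    exact ⟨hε x hx, Ideal.tensorSum_mono k (le_sSup J.2) (hΔ x hx),
      Submodule.mem_sSup_of_mem J.2 (hS x hx)⟩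
  · simp
  · intro x y hx hy
    simp only [map_add]
    exact ⟨by rw [hx.1, hy.1, add_zero], add_mem hx.2.1 hy.2.1, add_mem hx.2.2 hy.2.2⟩

/-- Hopf image, Banica–Bichon. For any algebra morphism `π : H → A`
out of a Hopf algebra there is a largest Hopf ideal of `H` contained in `ker π`; the
corresponding Hopf quotient `H → H/I` is the Hopf image of `π`, universal among Hopf
quotients of `H` through which `π` factors. -/
theorem exists_largest_hopfIdeal_le_ker
    {k : Type} [Field k] {H : Type} [Ring H] [HopfAlgebra k H]
    {A : Type} [Ring A] [Algebra k A] (π : H →ₐ[k] A) :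
    ∃ I : Ideal H, IsHopfIdeal (k := k) I ∧ I ≤ RingHom.ker π.toRingHom ∧
      ∀ J : Ideal H, IsHopfIdeal (k := k) J → J ≤ RingHom.ker π.toRingHom → J ≤ I :=
  ⟨sSup {J | IsHopfIdeal (k := k) J ∧ J ≤ RingHom.ker π.toRingHom},
    isHopfIdeal_sSup fun _ hJ => hJ.1, sSup_le fun _ hJ => hJ.2,
    fun _ hJ hker => le_sSup ⟨hJ, hker⟩⟩
end
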